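/- For all 1 ≤ i, j, i', j' ≤ m, all 1 ≤ a, b ≤ d', and all integers k, l ≥ 0, the commutator in End_ℂ(P) satisfies ⁅G_a(i,j;k), G_b(i',j';l)⁆ = δ_{a,b}·( δ_{j,i'}·G_a(i,j';k+l) − δ_{i,j'}·G_a(i',j;k+l) ). (This is the even–even x-part of Proposition 4.2 of the paper: the operators G_a(i,j;k), images of E^{p+q+i}_{p+q+j} ⊗ t̄_{w_a}^k, realize the Takiff algebra relations of ⊕_{a=1}^{d'} gl_{p+q+m+n}[t_{w_a}]/t_{w_a}^{ξ_a} restricted to the bosonic generators E^{p+q+i}_{p+q+j} with 1 ≤ i,j ≤ m.) -/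
import Mathlib


open MvPolynomial

/-- Multiplication by the variable `v`, as a `ℂ`-linear endomorphism of the
polynomial ring. -/
noncomputable def mulOp {σ : Type*} (v : σ) :
    Module.End ℂ (MvPolynomial σ ℂ) :=
  LinearMap.mulLeft ℂ (X v)

/-- The partial derivative with respect to the variable `v`, as a `ℂ`-linear endomorphism
of the polynomial ring. -/
noncomputable def derOp {σ : Type*} (v : σ) :
    Module.End ℂ (MvPolynomial σ ℂ) :=
  (pderiv v).toLinearMap

@[simp] lemma mulOp_apply {σ : Type*} (v : σ) (f : MvPolynomial σ ℂ) :
    mulOp v f = X v * f := rfl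

@[simp] lemma derOp_apply {σ : Type*} (v : σ) (f : MvPolynomial σ ℂ) :
    derOp v f = pderiv v f := rfl

lemma pderiv_pderiv_comm {σ : Type*} (u v : σ) (f : MvPolynomial σ ℂ) :
    pderiv u (pderiv v f) = pderiv v (pderiv u f) := by
  classical
  induction f using MvPolynomial.induction_on with
  | C a => simp
  | add f g hf hg => simp [hf, hg]
  | mul_X f n hf =>
    simp only [pderiv_mul, pderiv_X, Pi.single_apply, map_add, hf]
    split_ifs <;> simp_all <;> ring_nf <;> simp_all

lemma comm_mul_der {σ : Type*} [DecidableEq σ] (u v u' v' : σ) :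
    (mulOp u * derOp v) * (mulOp u' * derOp v')
      - (mulOp u' * derOp v') * (mulOp u * derOp v)
    = (if v = u' then mulOp u * derOp v' else 0)
      - (if v' = u then mulOp u' * derOp v else 0) := by
  refine LinearMap.ext fun f => ?_
  simp only [LinearMap.sub_apply, Module.End.mul_apply, mulOp_apply, derOp_apply,
    pderiv_mul, pderiv_X, Pi.single_apply, apply_ite, LinearMap.zero_apply]
  rw [pderiv_pderiv_comm v v' f]
  split_ifs <;> simp_all <;> ring_nf <;> simp_all

/-- The variable `y^α_r` of the Fock space `MvPolynomial (Fin d × (Fin p ⊕ Fin m)) ℂ`,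
with superscript index `α` (0-based, a natural number) and subscript `r : Fin p`. -/
def yvar (d p m : ℕ) (α : ℕ) (h : α < d) (r : Fin p) : Fin d × (Fin p ⊕ Fin m) :=
  (⟨α, h⟩, Sum.inl r)

/-- The variable `x^α_i`, with superscript index `α` (0-based) and subscript `i : Fin m`. -/
def xvar (d p m : ℕ) (α : ℕ) (h : α < d) (i : Fin m) : Fin d × (Fin p ⊕ Fin m) :=
  (⟨α, h⟩, Sum.inr i)

/-- `F_a(r,s;k) = -Σ_{α=D+1}^{D+ξ-k} ∂_{y^{α+k}_r} ∘ y^α_s`, where `D = d_a`, `ξ = ξ_a`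
(the superscripts are written 0-based, so `α` runs over `D, D+1, …, D+ξ-k-1`). -/
noncomputable def Fop (d p m : ℕ) (D ξ : ℕ) (r s : Fin p) (k : ℕ) :
    Module.End ℂ (MvPolynomial (Fin d × (Fin p ⊕ Fin m)) ℂ) :=
  - ∑ α ∈ Finset.range (ξ - k),
      if h : D + α + k < d then
        derOp (yvar d p m (D + α + k) h r) * mulOp (yvar d p m (D + α) (by omega) s)
      else 0

/-- `H_a(r,j;k) = Σ_{α=D+1}^{D+ξ-k} ∂_{y^{α+k}_r} ∘ ∂_{x^α_j}`, where `D = d_a`,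
`ξ = ξ_a`. -/
noncomputable def Hop (d p m : ℕ) (D ξ : ℕ) (r : Fin p) (j : Fin m) (k : ℕ) :
    Module.End ℂ (MvPolynomial (Fin d × (Fin p ⊕ Fin m)) ℂ) :=
  ∑ α ∈ Finset.range (ξ - k),
      if h : D + α + k < d then
        derOp (yvar d p m (D + α + k) h r) * derOp (xvar d p m (D + α) (by omega) j)
      else 0

/-- `K_a(i,s;k) = -Σ_{α=D+1}^{D+ξ-k} x^{α+k}_i ∘ y^α_s`, where `D = d_a`, `ξ = ξ_a`. -/
noncomputable def Kop (d p m : ℕ) (D ξ : ℕ) (i : Fin m) (s : Fin p) (k : ℕ) :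
    Module.End ℂ (MvPolynomial (Fin d × (Fin p ⊕ Fin m)) ℂ) :=
  - ∑ α ∈ Finset.range (ξ - k),
      if h : D + α + k < d then
        mulOp (xvar d p m (D + α + k) h i) * mulOp (yvar d p m (D + α) (by omega) s)
      else 0

/-- `G_a(i,j;k) = Σ_{α=D+1}^{D+ξ-k} x^{α+k}_i ∘ ∂_{x^α_j}`, where `D = d_a`, `ξ = ξ_a`. -/
noncomputable def Gop (d p m : ℕ) (D ξ : ℕ) (i j : Fin m) (k : ℕ) :
    Module.End ℂ (MvPolynomial (Fin d × (Fin p ⊕ Fin m)) ℂ) :=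
  ∑ α ∈ Finset.range (ξ - k),
      if h : D + α + k < d then
        mulOp (xvar d p m (D + α + k) h i) * derOp (xvar d p m (D + α) (by omega) j)
      else 0

/-- A total version of `xvar`. -/
def xv (d p m : ℕ) (hd : 0 < d) (n : ℕ) (i : Fin m) : Fin d × (Fin p ⊕ Fin m) :=
  if h : n < d then (⟨n, h⟩, Sum.inr i) else (⟨0, hd⟩, Sum.inr i)

lemma xv_inj {d p m : ℕ} (hd : 0 < d) {n n' : ℕ} (hn : n < d) (hn' : n' < d)
    (i i' : Fin m) : xv d p m hd n i = xv d p m hd n' i' ↔ (n = n' ∧ i = i') := by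
  simp [xv, dif_pos hn, dif_pos hn', Prod.ext_iff, Fin.ext_iff]

lemma Gop_eq {d p m D ξ : ℕ} (hd : 0 < d) (h : D + ξ ≤ d) (i j : Fin m) (k : ℕ) :
    Gop d p m D ξ i j k = ∑ α ∈ Finset.range (ξ - k),
      mulOp (xv d p m hd (D + α + k) i) * derOp (xv d p m hd (D + α) j) := by
  refine Finset.sum_congr rfl fun α hα => ?_
  rw [Finset.mem_range] at hα
  have h1 : D + α + k < d := by omega
  have h2 : D + α < d := by omega
  rw [dif_pos h1]
  simp [xv, xvar, dif_pos h1, dif_pos h2]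

lemma Gop_comm_expand {d p m D₁ ξ₁ D₂ ξ₂ : ℕ} (hd : 0 < d)
    (h1 : D₁ + ξ₁ ≤ d) (h2 : D₂ + ξ₂ ≤ d) (i j i' j' : Fin m) (k l : ℕ) :
    Gop d p m D₁ ξ₁ i j k * Gop d p m D₂ ξ₂ i' j' l
      - Gop d p m D₂ ξ₂ i' j' l * Gop d p m D₁ ξ₁ i j k
    = ∑ α ∈ Finset.range (ξ₁ - k), ∑ β ∈ Finset.range (ξ₂ - l),
        ((if xv d p m hd (D₁ + α) j = xv d p m hd (D₂ + β + l) i' then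
            mulOp (xv d p m hd (D₁ + α + k) i) * derOp (xv d p m hd (D₂ + β) j') else 0)
         - (if xv d p m hd (D₂ + β) j' = xv d p m hd (D₁ + α + k) i then
            mulOp (xv d p m hd (D₂ + β + l) i') * derOp (xv d p m hd (D₁ + α) j) else 0)) := by
  rw [Gop_eq hd h1 i j k, Gop_eq hd h2 i' j' l]
  rw [Finset.sum_mul_sum, Finset.sum_mul_sum, Finset.sum_comm (s := Finset.range (ξ₂ - l))]
  rw [← Finset.sum_sub_distrib]
  refine Finset.sum_congr rfl fun α hα => ?_
  rw [← Finset.sum_sub_distrib]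
  refine Finset.sum_congr rfl fun β hβ => ?_
  exact comm_mul_der _ _ _ _

lemma Gop_comm_disj {d p m D₁ ξ₁ D₂ ξ₂ : ℕ} (hd : 0 < d)
    (h1 : D₁ + ξ₁ ≤ d) (h2 : D₂ + ξ₂ ≤ d)
    (hdisj : D₁ + ξ₁ ≤ D₂ ∨ D₂ + ξ₂ ≤ D₁) (i j i' j' : Fin m) (k l : ℕ) :
    Gop d p m D₁ ξ₁ i j k * Gop d p m D₂ ξ₂ i' j' l
      - Gop d p m D₂ ξ₂ i' j' l * Gop d p m D₁ ξ₁ i j k = 0 := by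
  rw [Gop_comm_expand hd h1 h2]
  refine Finset.sum_eq_zero fun α hα => Finset.sum_eq_zero fun β hβ => ?_
  rw [Finset.mem_range] at hα hβ
  simp only [xv_inj hd (n := D₁ + α) (n' := D₂ + β + l) (by omega) (by omega),
    xv_inj hd (n := D₂ + β) (n' := D₁ + α + k) (by omega) (by omega)]
  rw [if_neg (by rintro ⟨h, -⟩; omega), if_neg (by rintro ⟨h, -⟩; omega), sub_zero]

lemma Gop_comm_same {d p m D ξ : ℕ} (hd : 0 < d) (h : D + ξ ≤ d)
    (i j i' j' : Fin m) (k l : ℕ) :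
    Gop d p m D ξ i j k * Gop d p m D ξ i' j' l
      - Gop d p m D ξ i' j' l * Gop d p m D ξ i j k
    = (if j = i' then Gop d p m D ξ i j' (k + l) else 0)
      - (if i = j' then Gop d p m D ξ i' j (k + l) else 0) := by
  rw [Gop_comm_expand hd h h]
  have step : ∀ α β : ℕ, α < ξ - k → β < ξ - l →
      ((if xv d p m hd (D + α) j = xv d p m hd (D + β + l) i' then
          mulOp (xv d p m hd (D + α + k) i) * derOp (xv d p m hd (D + β) j') else 0)
       - (if xv d p m hd (D + β) j' = xv d p m hd (D + α + k) i then
          mulOp (xv d p m hd (D + β + l) i') * derOp (xv d p m hd (D + α) j) else 0))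
      = ((if α = β + l ∧ j = i' then
          mulOp (xv d p m hd (D + α + k) i) * derOp (xv d p m hd (D + β) j') else 0)
       - (if β = α + k ∧ j' = i then
          mulOp (xv d p m hd (D + β + l) i') * derOp (xv d p m hd (D + α) j) else 0)) := by
    intro α β hα hβ
    simp only [xv_inj hd (n := D + α) (n' := D + β + l) (by omega) (by omega),
      xv_inj hd (n := D + β) (n' := D + α + k) (by omega) (by omega)]
    congr 2
    · simp only [eq_iff_iff]; constructor <;> rintro ⟨h1, h2⟩ <;> exact ⟨by omega, h2⟩
    · simp only [eq_iff_iff]; constructor <;> rintro ⟨h1, h2⟩ <;> exact ⟨by omega, h2⟩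
  rw [Finset.sum_congr rfl fun α hα => Finset.sum_congr rfl fun β hβ =>
    step α β (Finset.mem_range.mp hα) (Finset.mem_range.mp hβ)]
  simp only [Finset.sum_sub_distrib]
  congr 1
  · -- first part
    by_cases hji : j = i'
    · simp only [hji, and_true, if_pos rfl]
      rw [Finset.sum_comm]
      rw [Gop_eq hd h i j' (k + l)]
      calc ∑ β ∈ Finset.range (ξ - l), ∑ α ∈ Finset.range (ξ - k),
            (if α = β + l then
              mulOp (xv d p m hd (D + α + k) i) * derOp (xv d p m hd (D + β) j') else 0)
          = ∑ β ∈ Finset.range (ξ - l),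
            (if β + l ∈ Finset.range (ξ - k) then
              mulOp (xv d p m hd (D + (β + l) + k) i) * derOp (xv d p m hd (D + β) j') else 0) := by
            refine Finset.sum_congr rfl fun β _ => ?_
            exact Finset.sum_ite_eq' _ _ _
        _ = ∑ β ∈ (Finset.range (ξ - l)).filter (fun β => β + l ∈ Finset.range (ξ - k)),
              mulOp (xv d p m hd (D + (β + l) + k) i) * derOp (xv d p m hd (D + β) j') := by
            rw [Finset.sum_filter]
        _ = ∑ β ∈ Finset.range (ξ - (k + l)),
              mulOp (xv d p m hd (D + β + (k + l)) i) * derOp (xv d p m hd (D + β) j') := by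
            refine Finset.sum_congr ?_ fun β _ => by rw [show D + (β + l) + k = D + β + (k + l) by ring]
            ext β; simp only [Finset.mem_filter, Finset.mem_range]; omega
    · simp only [hji, and_false, if_false, if_neg hji, Finset.sum_const_zero]
  · -- second part
    by_cases hij : i = j'
    · subst hij
      simp only [and_true, if_pos rfl]
      rw [Gop_eq hd h i' j (k + l)]
      calc ∑ α ∈ Finset.range (ξ - k), ∑ β ∈ Finset.range (ξ - l),
            (if β = α + k then
              mulOp (xv d p m hd (D + β + l) i') * derOp (xv d p m hd (D + α) j) else 0)
          = ∑ α ∈ Finset.range (ξ - k),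
            (if α + k ∈ Finset.range (ξ - l) then
              mulOp (xv d p m hd (D + (α + k) + l) i') * derOp (xv d p m hd (D + α) j) else 0) := by
            refine Finset.sum_congr rfl fun α _ => Finset.sum_ite_eq' _ _ _
        _ = ∑ α ∈ (Finset.range (ξ - k)).filter (fun α => α + k ∈ Finset.range (ξ - l)),
              mulOp (xv d p m hd (D + (α + k) + l) i') * derOp (xv d p m hd (D + α) j) := by
            rw [Finset.sum_filter]
        _ = ∑ α ∈ Finset.range (ξ - (k + l)),
              mulOp (xv d p m hd (D + α + (k + l)) i') * derOp (xv d p m hd (D + α) j) := by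
            refine Finset.sum_congr ?_ fun α _ => by rw [show D + (α + k) + l = D + α + (k + l) by ring]
            ext α; simp only [Finset.mem_filter, Finset.mem_range]; omega
    · rw [if_neg hij]
      refine Finset.sum_eq_zero fun α _ => Finset.sum_eq_zero fun β _ => ?_
      rw [if_neg (by rintro ⟨-, h'⟩; exact hij h'.symm)]

/-- The operators `G_a(i,j;k)` satisfy
`⁅G_a(i,j;k), G_b(i',j';l)⁆ = δ_{ab} (δ_{j i'} G_a(i,j';k+l) - δ_{i j'} G_a(i',j;k+l))`,
the Takiff algebra relations of `⊕_{a=1}^{d'} gl_{p+q+m+n}[t]/t^{ξ_a}` restricted to the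
bosonic generators `E^{p+q+i}_{p+q+j}`, `1 ≤ i, j ≤ m`. -/
theorem stmt9 (p m : ℕ) (hpm : 1 ≤ p + m) (d' : ℕ) (hd' : 1 ≤ d')
    (ξ : Fin d' → ℕ) (hξ : ∀ a, 0 < ξ a) (d : ℕ) (hd : d = ∑ a, ξ a)
    (D : Fin d' → ℕ)
    (hD : ∀ a, D a = ∑ b ∈ Finset.univ.filter (fun b => b < a), ξ b)
    (a b : Fin d') (i j i' j' : Fin m) (k l : ℕ) :
    Gop d p m (D a) (ξ a) i j k * Gop d p m (D b) (ξ b) i' j' l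
      - Gop d p m (D b) (ξ b) i' j' l * Gop d p m (D a) (ξ a) i j k
    = if a = b then
        (if j = i' then Gop d p m (D a) (ξ a) i j' (k + l) else 0)
          - (if i = j' then Gop d p m (D a) (ξ a) i' j (k + l) else 0)
      else 0 := by
  classical
  have hd0 : 0 < d := by
    rw [hd]
    exact lt_of_lt_of_le (hξ a)
      (Finset.single_le_sum (fun c _ => Nat.zero_le _) (Finset.mem_univ a))
  have hnot : ∀ c : Fin d', c ∉ Finset.univ.filter (fun b => b < c) := by simp
  have hins : ∀ c : Fin d', D c + ξ c = ∑ x ∈ insert c (Finset.univ.filter (fun b => b < c)), ξ x := by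
    intro c; rw [Finset.sum_insert (hnot c), hD c]; ring
  have hkey : ∀ c : Fin d', D c + ξ c ≤ d := by
    intro c
    rw [hd, hins c]
    exact Finset.sum_le_sum_of_subset (Finset.subset_univ _)
  have hlt : ∀ c e : Fin d', c < e → D c + ξ c ≤ D e := by
    intro c e hce
    rw [hins c, hD e]
    refine Finset.sum_le_sum_of_subset ?_
    intro x hx
    simp only [Finset.mem_insert, Finset.mem_filter, Finset.mem_univ, true_and] at hx ⊢
    rcases hx with rfl | hx
    · exact hce
    · exact lt_trans hx hce
  by_cases hab : a = b
  · subst hab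
    rw [if_pos rfl]
    exact Gop_comm_same hd0 (hkey a) i j i' j' k l
  · rw [if_neg hab]
    rcases lt_or_gt_of_ne hab with hlt' | hlt'
    · exact Gop_comm_disj hd0 (hkey a) (hkey b) (Or.inl (hlt a b hlt')) i j i' j' k l
    · exact Gop_comm_disj hd0 (hkey a) (hkey b) (Or.inr (hlt b a hlt')) i j i' j' k l
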